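/- arXiv:2404.07784 — 2 statements merged into one kernel-verified Lean document; each statement's English description precedes it below -/
import Mathlib

section
/- The matrices Π₊ and Π₋ satisfy: Π₊ + Π₋ = I₄; Π±² = Π±; Π₊Π₋ = Π₋Π₊ = 0; and trace(Π₊) = trace(Π₋) = 2. -/
/-!
Write `Π± = (1 ± A)/2` with `A = λ⁻¹ M`, `M = S·τ − iβ(α·ν)`. Everything follows once `A² = I₄` and
`tr A = 0`: then `(1 ± A)/2` are complementary idempotents with `(1 + A)(1 - A) = 1 - A² = 0`, each of
trace `4/2`. Both facts about `M` come from the Clifford relations of the Dirac matrices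
(`(α·x)² = |x|²`, `β` anticommutes with `α·x`, `γ₅` commutes with `α·x` and anticommutes with `β`):
they give `(S·τ)² = |τ|²`, `(β(α·ν))² = −|ν|²` and `{S·τ, β(α·ν)} = 2⟨τ,ν⟩γ₅β`, which vanishes because
`τ = ν × ξ ⊥ ν`; hence `M² = (|τ|² + 1) I₄ = λ² I₄`.
-/

open Matrix Complex

noncomputable section

/-- Pauli matrix σ₁. -/
def sigma1 : Matrix (Fin 2) (Fin 2) ℂ := !![0, 1; 1, 0]

/-- Pauli matrix σ₂. -/
def sigma2 : Matrix (Fin 2) (Fin 2) ℂ := !![0, -Complex.I; Complex.I, 0]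

/-- Pauli matrix σ₃. -/
def sigma3 : Matrix (Fin 2) (Fin 2) ℂ := !![1, 0; 0, -1]

/-- The Dirac matrices α₁, α₂, α₃ in 2×2-block form `[[0, σⱼ],[σⱼ, 0]]`. -/
def diracAlpha : Fin 3 → Matrix (Fin 4) (Fin 4) ℂ :=
  ![Matrix.reindex finSumFinEquiv finSumFinEquiv (Matrix.fromBlocks 0 sigma1 sigma1 0),
    Matrix.reindex finSumFinEquiv finSumFinEquiv (Matrix.fromBlocks 0 sigma2 sigma2 0),
    Matrix.reindex finSumFinEquiv finSumFinEquiv (Matrix.fromBlocks 0 sigma3 sigma3 0)]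

/-- The Dirac matrix β = `[[I₂, 0],[0, −I₂]]`. -/
def diracBeta : Matrix (Fin 4) (Fin 4) ℂ :=
  Matrix.reindex finSumFinEquiv finSumFinEquiv
    (Matrix.fromBlocks (1 : Matrix (Fin 2) (Fin 2) ℂ) 0 0 (-1 : Matrix (Fin 2) (Fin 2) ℂ))

/-- α·x = x₁α₁ + x₂α₂ + x₃α₃. -/
def alphaDot (x : Fin 3 → ℝ) : Matrix (Fin 4) (Fin 4) ℂ :=
  (x 0 : ℂ) • diracAlpha 0 + (x 1 : ℂ) • diracAlpha 1 + (x 2 : ℂ) • diracAlpha 2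

/-- Euclidean inner product on ℝ³. -/
def inner3 (X Y : Fin 3 → ℝ) : ℝ := X 0 * Y 0 + X 1 * Y 1 + X 2 * Y 2

/-- Euclidean norm on ℝ³. -/
def norm3 (X : Fin 3 → ℝ) : ℝ := Real.sqrt (inner3 X X)

/-- Cross product on ℝ³. -/
def cross3 (X Y : Fin 3 → ℝ) : Fin 3 → ℝ :=
  ![X 1 * Y 2 - X 2 * Y 1, X 2 * Y 0 - X 0 * Y 2, X 0 * Y 1 - X 1 * Y 0]

/-- γ₅ := −i α₁α₂α₃. -/
def gamma5 : Matrix (Fin 4) (Fin 4) ℂ :=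
  (-Complex.I) • (diracAlpha 0 * diracAlpha 1 * diracAlpha 2)

/-- S·X := −γ₅ (α·X). -/
def sDot (X : Fin 3 → ℝ) : Matrix (Fin 4) (Fin 4) ℂ := -(gamma5 * alphaDot X)

/-- P₊ := (I₄ − iβ(α·ν))/2. -/
def Pplus (ν : Fin 3 → ℝ) : Matrix (Fin 4) (Fin 4) ℂ :=
  ((1 : ℂ) / 2) • (1 - Complex.I • (diracBeta * alphaDot ν))

/-- P₋ := (I₄ + iβ(α·ν))/2. -/
def Pminus (ν : Fin 3 → ℝ) : Matrix (Fin 4) (Fin 4) ℂ :=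
  ((1 : ℂ) / 2) • (1 + Complex.I • (diracBeta * alphaDot ν))

/-- λ := √(|ν × ξ|² + 1). -/
def lam (ν ξ : Fin 3 → ℝ) : ℝ :=
  Real.sqrt (inner3 (cross3 ν ξ) (cross3 ν ξ) + 1)

/-- Π₊ := (1/2)(I₄ + λ⁻¹(S·τ − iβ(α·ν))), τ = ν × ξ. -/
def Piplus (ν ξ : Fin 3 → ℝ) : Matrix (Fin 4) (Fin 4) ℂ :=
  ((1 : ℂ) / 2) •
    (1 + ((lam ν ξ : ℂ))⁻¹ • (sDot (cross3 ν ξ) - Complex.I • (diracBeta * alphaDot ν)))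

/-- Π₋ := (1/2)(I₄ − λ⁻¹(S·τ − iβ(α·ν))), τ = ν × ξ. -/
def Piminus (ν ξ : Fin 3 → ℝ) : Matrix (Fin 4) (Fin 4) ℂ :=
  ((1 : ℂ) / 2) •
    (1 - ((lam ν ξ : ℂ))⁻¹ • (sDot (cross3 ν ξ) - Complex.I • (diracBeta * alphaDot ν)))

/-- ρ₊ := (i⟨ν,ξ⟩ + λ)/s. -/
def rhoP (ν ξ : Fin 3 → ℝ) (s : ℝ) : ℂ :=
  (Complex.I * (inner3 ν ξ : ℂ) + (lam ν ξ : ℂ)) / (s : ℂ)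

/-- ρ₋ := (i⟨ν,ξ⟩ − λ)/s. -/
def rhoM (ν ξ : Fin 3 → ℝ) (s : ℝ) : ℂ :=
  (Complex.I * (inner3 ν ξ : ℂ) - (lam ν ξ : ℂ)) / (s : ℂ)

/-- L₀ := s⁻¹ (iα·ν)(α·ξ + β). -/
def L0 (ν ξ : Fin 3 → ℝ) (s : ℝ) : Matrix (Fin 4) (Fin 4) ℂ :=
  ((s : ℂ))⁻¹ • ((Complex.I • alphaDot ν) * (alphaDot ξ + diracBeta))

/-- k₊ := (1 + λ⁻¹)/2. -/
def kPlus (ν ξ : Fin 3 → ℝ) : ℝ := (1 + (lam ν ξ)⁻¹) / 2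

/-- k₋ := (1 − λ⁻¹)/2. -/
def kMinus (ν ξ : Fin 3 → ℝ) : ℝ := (1 - (lam ν ξ)⁻¹) / 2

/-- Θ := (2λ)⁻¹ S·τ, τ = ν × ξ. -/
def theta (ν ξ : Fin 3 → ℝ) : Matrix (Fin 4) (Fin 4) ℂ :=
  ((2 * lam ν ξ : ℝ) : ℂ)⁻¹ • sDot (cross3 ν ξ)

/-- The fundamental solution φ_{m,z,w} of the free Dirac operator. -/
def phiFS (m : ℝ) (z w : ℂ) (x : Fin 3 → ℝ) : Matrix (Fin 4) (Fin 4) ℂ :=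
  (Complex.exp (Complex.I * w * (norm3 x : ℂ)) / (4 * (Real.pi : ℂ) * (norm3 x : ℂ))) •
    (z • (1 : Matrix (Fin 4) (Fin 4) ℂ) + (m : ℂ) • diracBeta +
      ((1 - Complex.I * w * (norm3 x : ℂ)) * Complex.I / ((norm3 x : ℂ) ^ 2)) • alphaDot x)

lemma diracAlpha_zero_eq : diracAlpha 0 = !![0, 0, 0, 1; 0, 0, 1, 0; 0, 1, 0, 0; 1, 0, 0, 0] := by
  ext i j; fin_cases i <;> fin_cases j <;> rfl

lemma diracAlpha_one_eq :
    diracAlpha 1 = !![0, 0, 0, -I; 0, 0, I, 0; 0, -I, 0, 0; I, 0, 0, 0] := by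
  ext i j; fin_cases i <;> fin_cases j <;> rfl

lemma diracAlpha_two_eq : diracAlpha 2 = !![0, 0, 1, 0; 0, 0, 0, -1; 1, 0, 0, 0; 0, -1, 0, 0] := by
  ext i j; fin_cases i <;> fin_cases j <;> rfl

-- The off-diagonal entries of the `-1` block reduce to `-0`, not to `0`.
lemma diracBeta_eq : diracBeta = !![1, 0, 0, 0; 0, 1, 0, 0; 0, 0, -1, 0; 0, 0, 0, -1] := by
  ext i j; fin_cases i <;> fin_cases j <;> first | rfl | exact neg_zero

lemma alphaDot_eq (x : Fin 3 → ℝ) : alphaDot x =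
    !![0, 0, (x 2 : ℂ), x 0 - I * x 1;
       0, 0, x 0 + I * x 1, -(x 2 : ℂ);
       (x 2 : ℂ), x 0 - I * x 1, 0, 0;
       x 0 + I * x 1, -(x 2 : ℂ), 0, 0] := by
  ext i j
  fin_cases i <;> fin_cases j <;>
    simp [alphaDot, diracAlpha_zero_eq, diracAlpha_one_eq, diracAlpha_two_eq] <;> ring

lemma gamma5_eq : gamma5 = !![0, 0, 1, 0; 0, 0, 0, 1; 1, 0, 0, 0; 0, 1, 0, 0] := by
  ext i j
  fin_cases i <;> fin_cases j <;>
    simp [gamma5, diracAlpha_zero_eq, diracAlpha_one_eq, diracAlpha_two_eq]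

lemma alphaDot_mul_self (x : Fin 3 → ℝ) : alphaDot x * alphaDot x = (inner3 x x : ℂ) • 1 := by
  ext i j
  fin_cases i <;> fin_cases j <;>
    simp [alphaDot_eq, inner3] <;> ring_nf <;> simp

lemma alphaDot_mul_add_mul_alphaDot (x y : Fin 3 → ℝ) :
    alphaDot x * alphaDot y + alphaDot y * alphaDot x = (2 * inner3 x y : ℂ) • 1 := by
  ext i j
  fin_cases i <;> fin_cases j <;>
    simp [alphaDot_eq, inner3] <;> ring_nf <;> simp

lemma diracBeta_mul_self : diracBeta * diracBeta = 1 := by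
  ext i j
  fin_cases i <;> fin_cases j <;> simp [diracBeta_eq]

lemma diracBeta_mul_alphaDot (x : Fin 3 → ℝ) :
    diracBeta * alphaDot x = -(alphaDot x * diracBeta) := by
  ext i j
  fin_cases i <;> fin_cases j <;> simp [diracBeta_eq, alphaDot_eq]

lemma gamma5_mul_self : gamma5 * gamma5 = 1 := by
  ext i j
  fin_cases i <;> fin_cases j <;> simp [gamma5_eq]

lemma gamma5_mul_alphaDot (x : Fin 3 → ℝ) : gamma5 * alphaDot x = alphaDot x * gamma5 := by
  ext i j
  fin_cases i <;> fin_cases j <;> simp [gamma5_eq, alphaDot_eq]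

lemma gamma5_mul_diracBeta : gamma5 * diracBeta = -(diracBeta * gamma5) := by
  ext i j
  fin_cases i <;> fin_cases j <;> simp [gamma5_eq, diracBeta_eq]

lemma trace_sDot (x : Fin 3 → ℝ) : (sDot x).trace = 0 := by
  simp [sDot, gamma5_eq, alphaDot_eq, trace, Fin.sum_univ_four]

lemma alphaDot_mul_diracBeta (x : Fin 3 → ℝ) :
    alphaDot x * diracBeta = -(diracBeta * alphaDot x) := by
  rw [diracBeta_mul_alphaDot, neg_neg]

lemma sDot_mul_self (x : Fin 3 → ℝ) : sDot x * sDot x = (inner3 x x : ℂ) • 1 := by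
  rw [sDot, neg_mul_neg, mul_assoc, ← mul_assoc (alphaDot x), ← gamma5_mul_alphaDot,
    ← mul_assoc, ← mul_assoc, gamma5_mul_self, one_mul, alphaDot_mul_self]

lemma diracBeta_mul_alphaDot_mul_self (x : Fin 3 → ℝ) :
    diracBeta * alphaDot x * (diracBeta * alphaDot x) = -((inner3 x x : ℂ) • 1) := by
  rw [mul_assoc, ← mul_assoc (alphaDot x), alphaDot_mul_diracBeta, neg_mul, mul_neg]
  simp only [← mul_assoc, diracBeta_mul_self, one_mul, alphaDot_mul_self]

lemma sDot_mul_add_mul_sDot (x y : Fin 3 → ℝ) :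
    sDot x * (diracBeta * alphaDot y) + diracBeta * alphaDot y * sDot x =
      (2 * inner3 x y : ℂ) • (gamma5 * diracBeta) := by
  have hxy : sDot x * (diracBeta * alphaDot y) = gamma5 * diracBeta * (alphaDot x * alphaDot y) := by
    rw [sDot, neg_mul, mul_assoc, ← mul_assoc (alphaDot x), alphaDot_mul_diracBeta, neg_mul,
      mul_assoc, mul_neg, neg_neg, ← mul_assoc]
  have hyx : diracBeta * alphaDot y * sDot x = gamma5 * diracBeta * (alphaDot y * alphaDot x) := by
    rw [sDot, mul_neg, ← mul_assoc, mul_assoc diracBeta, ← gamma5_mul_alphaDot,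
      ← mul_assoc diracBeta, neg_eq_iff_eq_neg.mp gamma5_mul_diracBeta.symm]
    simp only [neg_mul, neg_neg, mul_assoc]
  rw [hxy, hyx, ← mul_add, alphaDot_mul_add_mul_alphaDot, mul_smul_comm, mul_one]

lemma trace_diracBeta_mul_alphaDot (x : Fin 3 → ℝ) : (diracBeta * alphaDot x).trace = 0 := by
  have h := congrArg trace (diracBeta_mul_alphaDot x)
  rw [trace_neg, trace_mul_comm (alphaDot x)] at h
  exact self_eq_neg.mp h

def piGenerator (τ ν : Fin 3 → ℝ) : Matrix (Fin 4) (Fin 4) ℂ :=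
  sDot τ - I • (diracBeta * alphaDot ν)

lemma piGenerator_mul_self {τ ν : Fin 3 → ℝ} (h : inner3 τ ν = 0) :
    piGenerator τ ν * piGenerator τ ν = ((inner3 τ τ + inner3 ν ν : ℝ) : ℂ) • 1 := by
  have hexp : piGenerator τ ν * piGenerator τ ν = sDot τ * sDot τ
      - I • (sDot τ * (diracBeta * alphaDot ν) + diracBeta * alphaDot ν * sDot τ)
      + (I * I) • (diracBeta * alphaDot ν * (diracBeta * alphaDot ν)) := by
    simp only [piGenerator, sub_mul, mul_sub, smul_mul_assoc, mul_smul_comm]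
    module
  rw [hexp, sDot_mul_self, sDot_mul_add_mul_sDot, diracBeta_mul_alphaDot_mul_self, h, I_mul_I]
  push_cast
  module

lemma trace_piGenerator (τ ν : Fin 3 → ℝ) : (piGenerator τ ν).trace = 0 := by
  rw [piGenerator, trace_sub, trace_smul, trace_sDot, trace_diracBeta_mul_alphaDot, smul_zero,
    sub_zero]

section Involution

variable {𝕜 R : Type*} [Field 𝕜] [Ring R] [Algebra 𝕜 R] {a : R}

lemma half_smul_one_add_add_half_smul_one_sub [NeZero (2 : 𝕜)] :
    (1 / 2 : 𝕜) • (1 + a) + (1 / 2 : 𝕜) • (1 - a) = 1 := by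
  rw [← smul_add, add_add_sub_cancel, ← two_smul 𝕜, smul_smul, one_div_mul_cancel two_ne_zero,
    one_smul]

lemma isIdempotentElem_half_smul_one_add [NeZero (2 : 𝕜)] (ha : a * a = 1) :
    IsIdempotentElem ((1 / 2 : 𝕜) • (1 + a)) := by
  have h : (1 + a) * (1 + a) = (2 : 𝕜) • (1 + a) := by
    rw [two_smul, mul_add, add_mul, add_mul, ha]; noncomm_ring
  rw [IsIdempotentElem, smul_mul_smul_comm, h, smul_smul]
  congr 1
  field_simp

lemma isIdempotentElem_half_smul_one_sub [NeZero (2 : 𝕜)] (ha : a * a = 1) :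
    IsIdempotentElem ((1 / 2 : 𝕜) • (1 - a)) := by
  simpa only [← sub_eq_add_neg] using
    isIdempotentElem_half_smul_one_add (𝕜 := 𝕜) (show -a * -a = 1 by rwa [neg_mul_neg])

lemma half_smul_one_add_mul_half_smul_one_sub (ha : a * a = 1) :
    (1 / 2 : 𝕜) • (1 + a) * (1 / 2 : 𝕜) • (1 - a) = 0 := by
  rw [smul_mul_smul_comm, ← (Commute.one_left a).mul_self_sub_mul_self_eq, one_mul, ha, sub_self,
    smul_zero]

lemma half_smul_one_sub_mul_half_smul_one_add (ha : a * a = 1) :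
    (1 / 2 : 𝕜) • (1 - a) * (1 / 2 : 𝕜) • (1 + a) = 0 := by
  rw [smul_mul_smul_comm, ← (Commute.one_left a).mul_self_sub_mul_self_eq', one_mul, ha, sub_self,
    smul_zero]

end Involution

section Trace

variable {𝕜 n : Type*} [Field 𝕜] [Fintype n] [DecidableEq n] {A : Matrix n n 𝕜}

lemma trace_half_smul_one_add (hA : A.trace = 0) :
    ((1 / 2 : 𝕜) • (1 + A)).trace = Fintype.card n / 2 := by
  rw [trace_smul, trace_add, trace_one, hA, add_zero, smul_eq_mul, one_div_mul_eq_div]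

lemma trace_half_smul_one_sub (hA : A.trace = 0) :
    ((1 / 2 : 𝕜) • (1 - A)).trace = Fintype.card n / 2 := by
  rw [trace_smul, trace_sub, trace_one, hA, sub_zero, smul_eq_mul, one_div_mul_eq_div]

end Trace

lemma inner3_self_nonneg (x : Fin 3 → ℝ) : 0 ≤ inner3 x x :=
  add_nonneg (add_nonneg (mul_self_nonneg _) (mul_self_nonneg _)) (mul_self_nonneg _)

lemma inner3_cross3_self_left (x y : Fin 3 → ℝ) : inner3 (cross3 x y) x = 0 := by
  simp only [inner3, cross3, Matrix.cons_val]; ring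

lemma lam_sq (ν ξ : Fin 3 → ℝ) : lam ν ξ ^ 2 = inner3 (cross3 ν ξ) (cross3 ν ξ) + 1 :=
  Real.sq_sqrt (by linarith [inner3_self_nonneg (cross3 ν ξ)])

lemma lam_pos (ν ξ : Fin 3 → ℝ) : 0 < lam ν ξ :=
  Real.sqrt_pos.mpr (by linarith [inner3_self_nonneg (cross3 ν ξ)])

def piInvolution (ν ξ : Fin 3 → ℝ) : Matrix (Fin 4) (Fin 4) ℂ :=
  (lam ν ξ : ℂ)⁻¹ • piGenerator (cross3 ν ξ) ν

lemma piInvolution_mul_self {ν : Fin 3 → ℝ} (hν : inner3 ν ν = 1) (ξ : Fin 3 → ℝ) :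
    piInvolution ν ξ * piInvolution ν ξ = 1 := by
  have hlam : (lam ν ξ : ℂ) ≠ 0 := ofReal_ne_zero.mpr (lam_pos ν ξ).ne'
  rw [piInvolution, smul_mul_smul_comm, piGenerator_mul_self (inner3_cross3_self_left ν ξ), hν,
    ← lam_sq, smul_smul]
  push_cast
  field_simp
  exact one_smul ℂ 1

lemma trace_piInvolution (ν ξ : Fin 3 → ℝ) : (piInvolution ν ξ).trace = 0 := by
  rw [piInvolution, trace_smul, trace_piGenerator, smul_zero]

theorem stmt7 (ν ξ : Fin 3 → ℝ) (hν : norm3 ν = 1) :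
    Piplus ν ξ + Piminus ν ξ = 1 ∧
    Piplus ν ξ * Piplus ν ξ = Piplus ν ξ ∧
    Piminus ν ξ * Piminus ν ξ = Piminus ν ξ ∧
    Piplus ν ξ * Piminus ν ξ = 0 ∧ Piminus ν ξ * Piplus ν ξ = 0 ∧
    (Piplus ν ξ).trace = 2 ∧ (Piminus ν ξ).trace = 2 := by
  have hA : piInvolution ν ξ * piInvolution ν ξ = 1 :=
    piInvolution_mul_self (Real.sqrt_eq_one.mp hν) ξ
  -- `Piplus ν ξ` and `Piminus ν ξ` unfold to `(1 / 2) • (1 ± piInvolution ν ξ)`.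
  exact ⟨half_smul_one_add_add_half_smul_one_sub,
    isIdempotentElem_half_smul_one_add hA, isIdempotentElem_half_smul_one_sub hA,
    half_smul_one_add_mul_half_smul_one_sub hA, half_smul_one_sub_mul_half_smul_one_add hA,
    (trace_half_smul_one_add (trace_piInvolution ν ξ)).trans (by norm_num),
    (trace_half_smul_one_sub (trace_piInvolution ν ξ)).trans (by norm_num)⟩

end
end

section
/- The symbol L₀ admits the spectral decomposition L₀ = (i⟨ν,ξ⟩/s) I₄ + (λ/s) Π₊ − (λ/s) Π₋; consequently L₀ Π₊ = Π₊ L₀ = ρ₊ Π₊ and L₀ Π₋ = Π₋ L₀ = ρ₋ Π₋. -/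
open Matrix Complex

noncomputable section

set_option maxHeartbeats 2000000

lemma dA0 : diracAlpha 0 = !![0,0,0,1; 0,0,1,0; 0,1,0,0; 1,0,0,0] := by
  ext i j
  fin_cases i <;> fin_cases j <;>
    simp [diracAlpha, sigma1, Matrix.fromBlocks, finSumFinEquiv, Fin.addCases] <;> rfl

lemma dA1 : diracAlpha 1 = !![0,0,0,-Complex.I; 0,0,Complex.I,0; 0,-Complex.I,0,0; Complex.I,0,0,0] := by
  ext i j
  fin_cases i <;> fin_cases j <;>
    simp [diracAlpha, sigma2, Matrix.fromBlocks, finSumFinEquiv, Fin.addCases] <;> rfl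

lemma dA2 : diracAlpha 2 = !![0,0,1,0; 0,0,0,-1; 1,0,0,0; 0,-1,0,0] := by
  ext i j
  fin_cases i <;> fin_cases j <;>
    simp [diracAlpha, sigma3, Matrix.fromBlocks, finSumFinEquiv, Fin.addCases] <;> rfl

lemma dB : diracBeta = !![1,0,0,0; 0,1,0,0; 0,0,-1,0; 0,0,0,-1] := by
  ext i j
  fin_cases i <;> fin_cases j <;>
    norm_num [diracBeta, Matrix.fromBlocks, finSumFinEquiv, Fin.addCases, Matrix.one_apply,
      Matrix.neg_apply, Fin.subNat, Fin.castLT, Fin.ext_iff, vecHead, vecTail]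

lemma g5 : gamma5 = !![0,0,1,0; 0,0,0,1; 1,0,0,0; 0,1,0,0] := by
  rw [gamma5, dA0, dA1, dA2]
  ext i j
  fin_cases i <;> fin_cases j <;>
    simp [Matrix.mul_apply, Fin.sum_univ_four, vecHead, vecTail]

lemma aD (x : Fin 3 → ℝ) : alphaDot x =
    !![0, 0, (x 2 : ℂ), (x 0 : ℂ) - Complex.I * (x 1 : ℂ);
       0, 0, (x 0 : ℂ) + Complex.I * (x 1 : ℂ), -(x 2 : ℂ);
       (x 2 : ℂ), (x 0 : ℂ) - Complex.I * (x 1 : ℂ), 0, 0;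
       (x 0 : ℂ) + Complex.I * (x 1 : ℂ), -(x 2 : ℂ), 0, 0] := by
  rw [alphaDot, dA0, dA1, dA2]
  ext i j
  fin_cases i <;> fin_cases j <;> simp [vecHead, vecTail] <;> ring

lemma sD (x : Fin 3 → ℝ) : sDot x =
    !![-(x 2 : ℂ), -((x 0 : ℂ) - Complex.I * (x 1 : ℂ)), 0, 0;
       -((x 0 : ℂ) + Complex.I * (x 1 : ℂ)), (x 2 : ℂ), 0, 0;
       0, 0, -(x 2 : ℂ), -((x 0 : ℂ) - Complex.I * (x 1 : ℂ));
       0, 0, -((x 0 : ℂ) + Complex.I * (x 1 : ℂ)), (x 2 : ℂ)] := by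
  rw [sDot, g5, aD]
  ext i j
  fin_cases i <;> fin_cases j <;>
    simp [Matrix.mul_apply, Fin.sum_univ_four, vecHead, vecTail]

lemma key1 (ν ξ : Fin 3 → ℝ) :
    (Complex.I • alphaDot ν) * (alphaDot ξ + diracBeta)
      = (Complex.I * (inner3 ν ξ : ℂ)) • (1 : Matrix (Fin 4) (Fin 4) ℂ)
        + (sDot (cross3 ν ξ) - Complex.I • (diracBeta * alphaDot ν)) := by
  rw [aD ν, aD ξ, dB, sD]
  ext i j
  fin_cases i <;> fin_cases j <;>
    simp [Matrix.mul_apply, Fin.sum_univ_four, Matrix.one_apply, inner3, cross3,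
      vecHead, vecTail] <;>
    ring_nf <;>
    simp [show (Complex.I^2 : ℂ) = -1 from Complex.I_sq,
      show (Complex.I^3 : ℂ) = -Complex.I from by rw [pow_succ, Complex.I_sq]; ring] <;>
    ring

lemma key2 (ν ξ : Fin 3 → ℝ) :
    (sDot (cross3 ν ξ) - Complex.I • (diracBeta * alphaDot ν))
      * (sDot (cross3 ν ξ) - Complex.I • (diracBeta * alphaDot ν))
      = ((inner3 (cross3 ν ξ) (cross3 ν ξ) : ℂ) + (inner3 ν ν : ℂ)) • 1 := by
  rw [aD ν, dB, sD]
  ext i j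
  fin_cases i <;> fin_cases j <;>
    simp [Matrix.mul_apply, Fin.sum_univ_four, Matrix.one_apply, inner3, cross3,
      vecHead, vecTail] <;>
    ring_nf <;>
    simp [show (Complex.I^2 : ℂ) = -1 from Complex.I_sq,
      show (Complex.I^3 : ℂ) = -Complex.I from by rw [pow_succ, Complex.I_sq]; ring] <;>
    ring


-- STATEMENT 8
theorem stmt8 (ν ξ : Fin 3 → ℝ) (s : ℝ) (hν : norm3 ν = 1) (hs : 0 < s) :
    L0 ν ξ s = ((Complex.I * (inner3 ν ξ : ℂ)) / (s : ℂ)) • 1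
      + (((lam ν ξ : ℂ)) / (s : ℂ)) • Piplus ν ξ
      - (((lam ν ξ : ℂ)) / (s : ℂ)) • Piminus ν ξ ∧
    L0 ν ξ s * Piplus ν ξ = rhoP ν ξ s • Piplus ν ξ ∧
    Piplus ν ξ * L0 ν ξ s = rhoP ν ξ s • Piplus ν ξ ∧
    L0 ν ξ s * Piminus ν ξ = rhoM ν ξ s • Piminus ν ξ ∧
    Piminus ν ξ * L0 ν ξ s = rhoM ν ξ s • Piminus ν ξ := by
  have hτ : (0:ℝ) ≤ inner3 (cross3 ν ξ) (cross3 ν ξ) := by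
    simp only [inner3]; nlinarith [mul_self_nonneg (cross3 ν ξ 0), mul_self_nonneg (cross3 ν ξ 1), mul_self_nonneg (cross3 ν ξ 2), mul_self_nonneg (ν 0), mul_self_nonneg (ν 1), mul_self_nonneg (ν 2)]
  have hlpos : 0 < lam ν ξ := Real.sqrt_pos.mpr (by linarith)
  have hl0 : (lam ν ξ : ℂ) ≠ 0 := by exact_mod_cast hlpos.ne'
  have hs0 : (s : ℂ) ≠ 0 := by exact_mod_cast hs.ne'
  have hνν : inner3 ν ν = 1 := by
    have h0 : (0:ℝ) ≤ inner3 ν ν := by simp only [inner3]; nlinarith [mul_self_nonneg (cross3 ν ξ 0), mul_self_nonneg (cross3 ν ξ 1), mul_self_nonneg (cross3 ν ξ 2), mul_self_nonneg (ν 0), mul_self_nonneg (ν 1), mul_self_nonneg (ν 2)]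
    have h1 := Real.sq_sqrt h0
    simp only [norm3] at hν
    rw [hν] at h1
    linarith [h1]
  have hlsq : ((lam ν ξ : ℂ))^2 = (inner3 (cross3 ν ξ) (cross3 ν ξ) : ℂ) + 1 := by
    have h2 : (lam ν ξ)^2 = inner3 (cross3 ν ξ) (cross3 ν ξ) + 1 := by
      rw [lam]; exact Real.sq_sqrt (by linarith)
    exact_mod_cast congrArg (Complex.ofReal) h2
  set M := sDot (cross3 ν ξ) - Complex.I • (diracBeta * alphaDot ν) with hM
  have hM2 : M * M = ((lam ν ξ : ℂ)^2) • (1 : Matrix (Fin 4) (Fin 4) ℂ) := by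
    rw [hM, key2, hνν, hlsq]; norm_num
  have hL0 : L0 ν ξ s = (s:ℂ)⁻¹ • ((Complex.I * (inner3 ν ξ : ℂ)) • 1 + M) := by
    rw [L0, key1, hM]
  refine ⟨?_, ?_, ?_, ?_, ?_⟩ <;>
    simp only [hL0, Piplus, Piminus, rhoP, rhoM, ← hM] <;>
    simp only [Matrix.mul_add, Matrix.add_mul, Matrix.mul_sub, Matrix.sub_mul,
      Matrix.smul_mul, Matrix.mul_smul, Matrix.mul_one, Matrix.one_mul,
      smul_add, smul_sub, smul_smul, hM2] <;>
    match_scalars <;> field_simp <;> ring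

end
end
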